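/- arXiv:2410.22338 — 4 statements merged into one kernel-verified Lean document; each statement's English description precedes it below -/
import Mathlib

section
/- For every positive integer n, the improper integral over t ∈ (0, ∞) of (1/t)·(2nπ/(t² + 4n²π²) − e^{−t}/(2nπ)) equals (1/(2nπ))·(γ + log(2π) + log n), where γ is the Euler–Mascheroni constant. -/
/-!
Put `a = 2nπ`. The integrand is `a⁻¹ ((1 - e^{-t}) / t - t / (t² + a²))`, and adding `log t · e^{-t}`
to the kernel in brackets gives the derivative of `H t = (1 - e^{-t}) log t - log (t² + a²) / 2`.
Since `H` tends to `-log a` at `0⁺` and to `0` at `∞`, while `∫₀^∞ log t · e^{-t} dt = Γ'(1) = -γ`,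
the kernel integrates to `γ + log a`.
-/

open Real MeasureTheory Set Filter Topology

theorem integral_log_mul_exp_neg :
    ∫ t in Ioi (0 : ℝ), log t * exp (-t) = -eulerMascheroniConstant := by
  have hGammaIntegral : HasDerivAt Complex.GammaIntegral (-(eulerMascheroniConstant : ℂ)) 1 := by
    refine Complex.hasDerivAt_Gamma_one.congr_of_eventuallyEq ?_
    filter_upwards [Complex.continuous_re.isOpen_preimage _ isOpen_Ioi |>.mem_nhds
      (by norm_num : (1 : ℂ).re ∈ Ioi 0)] with s hs
    exact (Complex.Gamma_eq_integral hs).symm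
  have h := (Complex.hasDerivAt_GammaIntegral (s := 1) (by norm_num)).unique hGammaIntegral
  simp only [sub_self, Complex.cpow_zero, one_mul] at h
  rw [← Complex.ofReal_inj, ← integral_complex_ofReal, Complex.ofReal_neg, ← h]
  push_cast
  rfl

-- The integral is `-γ ≠ 0`, so it is not the junk value of a non-integrable function.
theorem integrableOn_log_mul_exp_neg :
    IntegrableOn (fun t : ℝ ↦ log t * exp (-t)) (Ioi 0) :=
  Integrable.of_integral_ne_zero <| by
    rw [integral_log_mul_exp_neg, neg_ne_zero]
    exact (one_half_pos.trans one_half_lt_eulerMascheroniConstant).ne'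

theorem tendsto_one_sub_exp_neg_mul_log_nhds_zero :
    Tendsto (fun t : ℝ ↦ (1 - exp (-t)) * log t) (𝓝 0) (𝓝 0) := by
  have hmul_log : Tendsto (fun t : ℝ ↦ 2 * (t * log t)) (𝓝 0) (𝓝 0) := by
    simpa using (continuous_mul_log.tendsto 0).const_mul 2
  refine squeeze_zero_norm' ?_ (by simpa using hmul_log.norm)
  filter_upwards [Metric.closedBall_mem_nhds (0 : ℝ) one_pos] with t ht
  have hexp := abs_exp_sub_one_le (x := -t) (by simpa using ht)
  rw [abs_sub_comm, abs_neg] at hexp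
  rw [norm_mul, Real.norm_eq_abs, ← mul_assoc]
  exact mul_le_mul_of_nonneg_right hexp (abs_nonneg _)

theorem tendsto_exp_neg_mul_log_atTop :
    Tendsto (fun t : ℝ ↦ exp (-t) * log t) atTop (𝓝 0) := by
  have hmul_exp : Tendsto (fun t : ℝ ↦ t * exp (-t)) atTop (𝓝 0) := by
    simpa using tendsto_pow_mul_exp_neg_atTop_nhds_zero 1
  refine squeeze_zero' ?_ ?_ hmul_exp
  · filter_upwards [eventually_ge_atTop 1] with t ht
    exact mul_nonneg (exp_pos _).le (log_nonneg ht)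
  · filter_upwards [eventually_gt_atTop 0] with t ht
    rw [mul_comm t]
    exact mul_le_mul_of_nonneg_left ((log_le_sub_one_of_pos ht).trans (by linarith))
      (exp_pos _).le

theorem tendsto_log_sub_log_sq_add_sq_div_two_atTop (a : ℝ) :
    Tendsto (fun t : ℝ ↦ log t - log (t ^ 2 + a ^ 2) / 2) atTop (𝓝 0) := by
  have hcont : ContinuousAt (fun x : ℝ ↦ -log (1 + x ^ 2) / 2) 0 :=
    ((continuousAt_log (by norm_num)).comp (by fun_prop)).neg.div_const 2
  have := hcont.tendsto.comp (tendsto_const_nhds.div_atTop tendsto_id : Tendsto (a / ·) atTop _)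
  simp only [Function.comp_def, ne_eq, OfNat.ofNat_ne_zero, not_false_eq_true, zero_pow,
    add_zero, log_one, neg_zero, zero_div] at this
  refine this.congr' ?_
  filter_upwards [eventually_gt_atTop 0] with t ht
  rw [show 1 + (a / t) ^ 2 = (t ^ 2 + a ^ 2) / t ^ 2 by field_simp,
    log_div (by positivity) (by positivity), log_pow]
  push_cast
  ring

theorem one_sub_exp_neg_div_mem_Icc {t : ℝ} (ht : 0 < t) : (1 - exp (-t)) / t ∈ Icc 0 1 := by
  have hle : 1 - exp (-t) ≤ t := by linarith [add_one_le_exp (-t)]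
  have hnonneg : 0 ≤ 1 - exp (-t) := sub_nonneg.2 (exp_le_one_iff.2 (neg_nonpos.2 ht.le))
  exact ⟨div_nonneg hnonneg ht.le, (div_le_one ht).2 hle⟩

variable {a : ℝ}

theorem integrableOn_one_sub_exp_neg_div_sub_div_sq_add_sq (ha : a ≠ 0) :
    IntegrableOn (fun t : ℝ ↦ (1 - exp (-t)) / t - t / (t ^ 2 + a ^ 2)) (Ioi 0) := by
  have hmeas : Measurable fun t : ℝ ↦ (1 - exp (-t)) / t - t / (t ^ 2 + a ^ 2) := by fun_prop
  rw [← Ioc_union_Ioi_eq_Ioi zero_le_one]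
  refine IntegrableOn.union ?_ ?_
  · refine IntegrableOn.sub ?_ <|
      (continuous_id.div (by fun_prop) fun t ↦ by positivity).integrableOn_Ioc
    refine Measure.integrableOn_of_bounded (M := 1) (by simp)
      (by fun_prop : Measurable _).aestronglyMeasurable ?_
    filter_upwards [ae_restrict_mem measurableSet_Ioc] with t ht
    have := one_sub_exp_neg_div_mem_Icc ht.1
    rw [Real.norm_eq_abs, abs_of_nonneg this.1]
    exact this.2
  · have hmajorant : IntegrableOn (fun t : ℝ ↦ a ^ 2 * t ^ (-2 : ℝ) + exp (-t)) (Ioi 1) :=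
      ((integrableOn_Ioi_rpow_of_lt (by norm_num) one_pos).const_mul _).add
        (integrableOn_exp_neg_Ioi 1)
    refine hmajorant.mono' hmeas.aestronglyMeasurable ?_
    filter_upwards [ae_restrict_mem measurableSet_Ioi] with t (ht : 1 < t)
    have ht0 : 0 < t := one_pos.trans ht
    have hsplit : (1 - exp (-t)) / t - t / (t ^ 2 + a ^ 2)
        = a ^ 2 / (t * (t ^ 2 + a ^ 2)) - exp (-t) / t := by
      field_simp
      ring
    have hrat : a ^ 2 / (t * (t ^ 2 + a ^ 2)) ≤ a ^ 2 * t ^ (-2 : ℝ) := by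
      rw [rpow_neg ht0.le, rpow_two, ← div_eq_mul_inv]
      gcongr
      nlinarith [sq_nonneg a]
    have hexp : exp (-t) / t ≤ exp (-t) := div_le_self (exp_pos _).le ht.le
    rw [hsplit, Real.norm_eq_abs]
    refine (abs_sub _ _).trans ?_
    rw [abs_of_nonneg (by positivity), abs_of_nonneg (by positivity)]
    exact add_le_add hrat hexp

theorem hasDerivAt_one_sub_exp_neg_mul_log_sub_log_sq_add_sq_div_two {t : ℝ} (ht : 0 < t) :
    HasDerivAt (fun t : ℝ ↦ (1 - exp (-t)) * log t - log (t ^ 2 + a ^ 2) / 2)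
      (log t * exp (-t) + ((1 - exp (-t)) / t - t / (t ^ 2 + a ^ 2))) t := by
  have hexp : HasDerivAt (fun t : ℝ ↦ 1 - exp (-t)) (exp (-t)) t := by
    simpa using ((hasDerivAt_neg t).exp).const_sub 1
  have hquad : HasDerivAt (fun t : ℝ ↦ t ^ 2 + a ^ 2) (2 * t) t := by
    simpa using (hasDerivAt_pow 2 t).add_const (a ^ 2)
  refine ((hexp.mul (hasDerivAt_log ht.ne')).sub
    ((hquad.log (by positivity)).div_const 2)).congr_deriv ?_
  field_simp
  ring

theorem integral_one_sub_exp_neg_div_sub_div_sq_add_sq (ha : a ≠ 0) :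
    ∫ t in Ioi (0 : ℝ), ((1 - exp (-t)) / t - t / (t ^ 2 + a ^ 2))
      = eulerMascheroniConstant + log a := by
  set H : ℝ → ℝ := fun t ↦ (1 - exp (-t)) * log t - log (t ^ 2 + a ^ 2) / 2
  have hcont : ContinuousWithinAt H (Ici 0) 0 := by
    refine (ContinuousAt.sub ?_ ?_).continuousWithinAt
    · simpa [ContinuousAt] using tendsto_one_sub_exp_neg_mul_log_nhds_zero
    · exact ((continuousAt_log (by positivity)).comp (by fun_prop)).div_const 2
  have hlim : Tendsto H atTop (𝓝 0) := by
    have := (tendsto_log_sub_log_sq_add_sq_div_two_atTop a).sub tendsto_exp_neg_mul_log_atTop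
    simp only [sub_zero] at this
    exact this.congr fun t ↦ by ring
  have hFTC := integral_Ioi_of_hasDerivAt_of_tendsto hcont
    (fun t ht ↦ hasDerivAt_one_sub_exp_neg_mul_log_sub_log_sq_add_sq_div_two ht)
    (integrableOn_log_mul_exp_neg.add (integrableOn_one_sub_exp_neg_div_sub_div_sq_add_sq ha))
    hlim
  rw [integral_add integrableOn_log_mul_exp_neg
    (integrableOn_one_sub_exp_neg_div_sub_div_sq_add_sq ha), integral_log_mul_exp_neg] at hFTC
  have hH0 : H 0 = -log a := by
    simp [H, log_pow]
  rw [hH0] at hFTC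
  linarith

theorem kummer_coefficient_integral (n : ℕ) (hn : 0 < n) :
    ∫ t in Set.Ioi (0:ℝ),
        (1/t) * ((2*(n:ℝ)*Real.pi) / (t^2 + 4*(n:ℝ)^2*Real.pi^2)
          - Real.exp (-t) / (2*(n:ℝ)*Real.pi))
      = (1 / (2*(n:ℝ)*Real.pi))
        * (Real.eulerMascheroniConstant + Real.log (2*Real.pi) + Real.log n) := by
  set a : ℝ := 2 * n * π
  have ha : a ≠ 0 := by positivity
  have hintegrand : ∀ t ∈ Ioi (0 : ℝ), 1 / t * (a / (t ^ 2 + 4 * n ^ 2 * π ^ 2) - exp (-t) / a)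
      = 1 / a * ((1 - exp (-t)) / t - t / (t ^ 2 + a ^ 2)) := fun t (ht : 0 < t) ↦ by
    field_simp [ht.ne']
    ring
  rw [setIntegral_congr_fun measurableSet_Ioi hintegrand, integral_const_mul,
    integral_one_sub_exp_neg_div_sub_div_sq_add_sq ha, add_assoc, ← log_mul (by positivity)
    (by positivity), mul_right_comm]
end

section
/- The Euler–Mascheroni constant γ satisfies γ = ∫₀^∞ (1/(1+t) − e^{−t}) · (1/t) dt (Dirichlet's formula). -/
/-!
Since `Γ'(1) = -γ` and `Γ'` is the `Γ`-integral differentiated under the integral sign,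
`∫₀^∞ e^{-t} log t dt = -γ`. The function `H t = (1 - e^{-t}) log t - log (1 + t)` has derivative
`e^{-t} log t + (1/(1+t) - e^{-t}) / t` and tends to `0` both as `t → 0⁺` and as `t → ∞`, so the
integral of that derivative over `(0, ∞)` vanishes, which is Dirichlet's formula.
-/

open Real MeasureTheory Set Filter Topology

lemma integrableOn_exp_neg_mul_log : IntegrableOn (fun t ↦ exp (-t) * log t) (Ioi 0) := by
  have hcont : ContinuousOn (fun t ↦ exp (-t) * log t) (Ioi 0) :=
    (continuous_exp.comp continuous_neg).continuousOn.mul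
      (continuousOn_log.mono fun t ht ↦ ne_of_gt ht)
  rw [← Ioc_union_Ioi_eq_Ioi zero_le_one, integrableOn_union]
  constructor
  · have hlog : IntegrableOn log (Ioc 0 1) :=
      (intervalIntegrable_iff_integrableOn_Ioc_of_le zero_le_one).mp
        intervalIntegral.intervalIntegrable_log'
    refine hlog.norm.mono' ((hcont.mono Ioc_subset_Ioi_self).aestronglyMeasurable
      measurableSet_Ioc) ((ae_restrict_iff' measurableSet_Ioc).mpr (ae_of_all _ ?_))
    intro t ht
    rw [norm_mul, norm_of_nonneg (exp_pos _).le]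
    exact mul_le_of_le_one_left (norm_nonneg _) (exp_le_one_iff.mpr (by linarith [ht.1]))
  · have hgamma : IntegrableOn (fun t ↦ exp (-t) * t ^ ((2 : ℝ) - 1)) (Ioi 1) :=
      (GammaIntegral_convergent two_pos).mono_set (Ioi_subset_Ioi zero_le_one)
    refine hgamma.mono' ((hcont.mono (Ioi_subset_Ioi zero_le_one)).aestronglyMeasurable
      measurableSet_Ioi) ((ae_restrict_iff' measurableSet_Ioi).mpr (ae_of_all _ ?_))
    intro t (ht : 1 < t)
    rw [norm_mul, norm_of_nonneg (exp_pos _).le, norm_of_nonneg (log_nonneg ht.le),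
      show (2 : ℝ) - 1 = 1 by norm_num, rpow_one]
    exact mul_le_mul_of_nonneg_left (log_le_self (by linarith)) (exp_pos _).le

lemma integral_exp_neg_mul_log : ∫ t in Ioi 0, exp (-t) * log t = -eulerMascheroniConstant := by
  have hGamma : Complex.Gamma =ᶠ[𝓝 1] Complex.GammaIntegral := by
    filter_upwards [Complex.continuous_re.isOpen_preimage _ isOpen_Ioi |>.mem_nhds
      (by simp : (1 : ℂ) ∈ Complex.re ⁻¹' Ioi 0)] with s hs
    exact Complex.Gamma_eq_integral hs
  have hderiv := (Complex.hasDerivAt_GammaIntegral (s := 1) (by simp)).congr_of_eventuallyEq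
    hGamma
  have hint : ∫ t in Ioi (0 : ℝ), (t : ℂ) ^ ((1 : ℂ) - 1) * (log t * exp (-t))
      = ((∫ t in Ioi 0, exp (-t) * log t : ℝ) : ℂ) := by
    refine (setIntegral_congr_fun measurableSet_Ioi fun t _ ↦ ?_).trans integral_ofReal
    rw [sub_self, Complex.cpow_zero, one_mul, mul_comm]
    norm_cast
  rw [hint] at hderiv
  exact_mod_cast hderiv.unique Complex.hasDerivAt_Gamma_one

lemma dirichlet_integrand_mem_Icc {t : ℝ} (ht : 0 < t) :
    (1 / (1 + t) - exp (-t)) * (1 / t) ∈ Icc 0 (1 + t ^ 2)⁻¹ := by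
  have h1t : 0 < 1 + t := by linarith
  have hlow : exp (-t) ≤ 1 / (1 + t) := by
    rw [exp_neg, one_div]
    exact inv_anti₀ h1t (by linarith [add_one_le_exp t])
  refine ⟨mul_nonneg (by linarith) (by positivity), ?_⟩
  rcases le_or_gt t 1 with ht1 | ht1
  · calc (1 / (1 + t) - exp (-t)) * (1 / t) ≤ (1 / (1 + t) - (1 - t)) * (1 / t) := by
          gcongr; exact one_sub_le_exp_neg t
      _ = t / (1 + t) := by field_simp; ring
      _ ≤ (1 + t ^ 2)⁻¹ := by
          rw [div_le_iff₀ h1t, inv_mul_eq_div, le_div_iff₀ (by positivity)]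
          nlinarith
  · calc (1 / (1 + t) - exp (-t)) * (1 / t) ≤ 1 / (1 + t) * (1 / t) := by
          gcongr; linarith [exp_pos (-t)]
      _ ≤ (1 + t ^ 2)⁻¹ := by
          rw [one_div_mul_one_div, one_div]
          exact inv_anti₀ (by positivity) (by nlinarith)

lemma integrableOn_dirichlet_integrand :
    IntegrableOn (fun t ↦ (1 / (1 + t) - exp (-t)) * (1 / t)) (Ioi 0) := by
  have hcont : ContinuousOn (fun t ↦ (1 / (1 + t) - exp (-t)) * (1 / t)) (Ioi 0) := by
    intro t (ht : 0 < t)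
    exact (by fun_prop (disch := positivity) :
      ContinuousAt (fun t ↦ (1 / (1 + t) - exp (-t)) * (1 / t)) t).continuousWithinAt
  refine integrable_inv_one_add_sq.integrableOn.mono'
    (hcont.aestronglyMeasurable measurableSet_Ioi)
    ((ae_restrict_iff' measurableSet_Ioi).mpr (ae_of_all _ fun t (ht : 0 < t) ↦ ?_))
  obtain ⟨hnonneg, hle⟩ := dirichlet_integrand_mem_Icc ht
  rwa [norm_of_nonneg hnonneg]

noncomputable def dirichletPrimitive (t : ℝ) : ℝ := (1 - exp (-t)) * log t - log (1 + t)

lemma hasDerivAt_dirichletPrimitive {x : ℝ} (hx : 0 < x) :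
    HasDerivAt dirichletPrimitive
      (exp (-x) * log x + (1 / (1 + x) - exp (-x)) * (1 / x)) x := by
  have h1x : 1 + x ≠ 0 := by positivity
  have hexp : HasDerivAt (fun t ↦ 1 - exp (-t)) (exp (-x)) x := by
    simpa using ((hasDerivAt_neg x).exp).const_sub 1
  have hlog : HasDerivAt (fun t ↦ log (1 + t)) (1 + x)⁻¹ x := by
    simpa using ((hasDerivAt_id x).const_add 1).log h1x
  refine ((hexp.mul (hasDerivAt_log hx.ne')).sub hlog).congr_deriv ?_
  field_simp
  ring

lemma dirichletPrimitive_zero : dirichletPrimitive 0 = 0 := by simp [dirichletPrimitive]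

lemma tendsto_dirichletPrimitive_nhdsGT_zero :
    Tendsto dirichletPrimitive (𝓝[>] 0) (𝓝 0) := by
  unfold dirichletPrimitive
  have hmul : Tendsto (fun t ↦ (1 - exp (-t)) * log t) (𝓝[>] 0) (𝓝 0) := by
    have hxlog : Tendsto (fun t ↦ t * log t) (𝓝[>] 0) (𝓝 0) := by
      simpa using (continuous_mul_log.tendsto 0).mono_left nhdsWithin_le_nhds
    refine squeeze_zero_norm' ?_ (by simpa using hxlog.norm)
    filter_upwards [self_mem_nhdsWithin] with t (ht : 0 < t)
    have hpos : 0 ≤ 1 - exp (-t) := by linarith [exp_le_one_iff.mpr (neg_nonpos.mpr ht.le)]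
    rw [norm_mul, Real.norm_eq_abs, Real.norm_eq_abs, abs_of_nonneg hpos, abs_of_pos ht]
    gcongr
    linarith [one_sub_le_exp_neg t]
  have hlog : Tendsto (fun t ↦ log (1 + t)) (𝓝[>] 0) (𝓝 0) := by
    have hcont : ContinuousAt (fun t ↦ log (1 + t)) 0 := by fun_prop (disch := norm_num)
    simpa using hcont.tendsto.mono_left nhdsWithin_le_nhds
  simpa using hmul.sub hlog

lemma tendsto_dirichletPrimitive_atTop : Tendsto dirichletPrimitive atTop (𝓝 0) := by
  have hexp : Tendsto (fun t ↦ exp (-t) * log t) atTop (𝓝 0) := by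
    refine squeeze_zero_norm' ?_ (by simpa using tendsto_pow_mul_exp_neg_atTop_nhds_zero 1)
    filter_upwards [eventually_ge_atTop 1] with t ht
    rw [norm_mul, norm_of_nonneg (exp_pos _).le, norm_of_nonneg (log_nonneg ht), mul_comm]
    gcongr
    exact log_le_self (by linarith)
  have hlog : Tendsto (fun t ↦ log (t + 1) - log t) atTop (𝓝 0) := tendsto_log_comp_add_sub_log 1
  have hsum := hlog.neg.sub hexp
  rw [neg_zero, sub_zero] at hsum
  refine hsum.congr fun t ↦ ?_
  rw [dirichletPrimitive, add_comm t]
  ring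

theorem dirichlet_formula_gamma :
    Real.eulerMascheroniConstant
      = ∫ t in Set.Ioi (0:ℝ), (1/(1+t) - Real.exp (-t)) * (1/t) := by
  have hcont : ContinuousWithinAt dirichletPrimitive (Ici 0) 0 := by
    rw [← continuousWithinAt_Ioi_iff_Ici, ContinuousWithinAt, dirichletPrimitive_zero]
    exact tendsto_dirichletPrimitive_nhdsGT_zero
  have hftc := integral_Ioi_of_hasDerivAt_of_tendsto hcont
    (fun _ hx ↦ hasDerivAt_dirichletPrimitive hx)
    (integrableOn_exp_neg_mul_log.add integrableOn_dirichlet_integrand)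
    tendsto_dirichletPrimitive_atTop
  rw [integral_add integrableOn_exp_neg_mul_log integrableOn_dirichlet_integrand,
    integral_exp_neg_mul_log, dirichletPrimitive_zero] at hftc
  linarith
end

section
/- For every real z with 0 ≤ z ≤ 1, ∫₀^z log Γ(x) dx = z(1−z)/2 + (z/2)·log(2π) + z·log Γ(z) − log G(1+z), where G is the Barnes G-function (Alexeiewsky's theorem). -/
open Real

/-- The logarithm of the Barnes G-function via its Weierstrass product:
`G(1+w) = (2π)^{w/2} exp(-(w + w²(1+γ))/2) ∏_{k=1}^∞ (1+w/k)^k e^{w²/(2k) - w}`,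
so `logBarnesG z` is `log G(z)` for real `z > 0` (with `w = z - 1`). -/
noncomputable def logBarnesG (z : ℝ) : ℝ :=
  (z-1)/2 * Real.log (2*Real.pi)
    - ((z-1) + (z-1)^2 * (1 + Real.eulerMascheroniConstant)) / 2
    + ∑' k : ℕ, (((k:ℝ)+1) * Real.log (1 + (z-1)/((k:ℝ)+1))
        + (z-1)^2 / (2*((k:ℝ)+1)) - (z-1))

/-!
Taking logarithms in the Weierstrass product of `Γ` gives
`log Γ(x) + log x + γ x = ∑_{k ≥ 1} (x/k - log (1 + x/k))` for `x ≥ 0`, a series of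
nonnegative terms bounded by `(x/k)²`, so it can be integrated termwise over `[0, z]`.
The `k`-th term has antiderivative `x²/(2k) - (k + x) log (1 + x/k) + x`, and `z` times the
series at `z` minus the integrated series is termwise the series in the Weierstrass product
of `G(1 + z)`.
-/

open Finset MeasureTheory Set intervalIntegral

noncomputable def weierstrassTerm (c x : ℝ) : ℝ :=
  x / c - log (1 + x / c)

section weierstrassTerm

variable {c x : ℝ}

lemma weierstrassTerm_nonneg (hc : 0 ≤ c) (hx : 0 ≤ x) : 0 ≤ weierstrassTerm c x := by
  have h := log_le_sub_one_of_pos (x := 1 + x / c) (by positivity)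
  rw [weierstrassTerm]
  linarith

lemma weierstrassTerm_le_sq (hc : 0 ≤ c) (hx : 0 ≤ x) :
    weierstrassTerm c x ≤ (x / c) ^ 2 := by
  set t := x / c
  have ht : 0 ≤ t := by positivity
  have h := one_sub_inv_le_log_of_pos (x := 1 + t) (by positivity)
  have hsub : t - (1 - (1 + t)⁻¹) ≤ t ^ 2 := by
    rw [show t - (1 - (1 + t)⁻¹) = t ^ 2 / (1 + t) by field_simp; ring]
    exact div_le_self (by positivity) (by linarith)
  rw [weierstrassTerm]
  linarith

lemma integral_weierstrassTerm (hc : 0 < c) {z : ℝ} (hz : 0 ≤ z) :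
    ∫ x in (0 : ℝ)..z, weierstrassTerm c x
      = z ^ 2 / (2 * c) - (c + z) * log (1 + z / c) + z := by
  have hnonneg : ∀ x ∈ uIcc 0 z, 0 ≤ x := fun x hx => by
    rw [uIcc_of_le hz] at hx
    exact hx.1
  have hpos : ∀ x ∈ uIcc 0 z, 0 < 1 + x / c := fun x hx => by
    have hx0 := hnonneg x hx
    positivity
  have hderiv : ∀ x ∈ uIcc 0 z, HasDerivAt
      (fun x => x ^ 2 / (2 * c) - (c + x) * log (1 + x / c) + x) (weierstrassTerm c x) x := by
    intro x hx
    have hlog : HasDerivAt (fun x => log (1 + x / c)) ((1 / c) / (1 + x / c)) x :=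
      (((hasDerivAt_id x).div_const c).const_add 1).log (hpos x hx).ne'
    refine ((((hasDerivAt_pow 2 x).div_const (2 * c)).sub
      (((hasDerivAt_id x).const_add c).mul hlog)).add (hasDerivAt_id x)).congr_deriv ?_
    have hx0 := hnonneg x hx
    have hcx : c + x ≠ 0 := by positivity
    rw [weierstrassTerm, id]
    field_simp
    ring
  have hcont : ContinuousOn (weierstrassTerm c) (uIcc 0 z) :=
    ((continuousOn_id.div_const c).sub
      ((continuousOn_const.add (continuousOn_id.div_const c)).log fun x hx => (hpos x hx).ne'))
  rw [integral_eq_sub_of_hasDerivAt hderiv hcont.intervalIntegrable]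
  simp

end weierstrassTerm

lemma sum_range_weierstrassTerm {x : ℝ} (hx : 0 < x) (n : ℕ) :
    ∑ k ∈ range n, weierstrassTerm (k + 1) x
      = BohrMollerup.logGammaSeq x n + log x + x * (harmonic n - log n) := by
  induction n with
  | zero => simp [BohrMollerup.logGammaSeq]
  | succ n ih =>
    have hn : (0 : ℝ) < n + 1 := by positivity
    rw [sum_range_succ, ih, weierstrassTerm,
      show 1 + x / (n + 1) = (x + (n + 1)) / (n + 1) by field_simp; ring,
      log_div (by positivity) hn.ne']
    simp only [BohrMollerup.logGammaSeq, Nat.factorial_succ, sum_range_succ (n := n + 1),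
      harmonic_succ]
    push_cast
    rw [log_mul hn.ne' (by positivity)]
    ring

lemma hasSum_weierstrassTerm {x : ℝ} (hx : 0 ≤ x) :
    HasSum (fun k : ℕ => weierstrassTerm (k + 1) x)
      (log (Gamma x) + log x + eulerMascheroniConstant * x) := by
  rcases hx.eq_or_lt with rfl | hx
  · simp [weierstrassTerm]
  rw [hasSum_iff_tendsto_nat_of_nonneg (fun k => weierstrassTerm_nonneg (by positivity) hx.le)]
  simp_rw [sum_range_weierstrassTerm hx]
  rw [mul_comm eulerMascheroniConstant x]
  exact ((BohrMollerup.tendsto_log_gamma hx).add_const _).add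
    (tendsto_harmonic_sub_log.const_mul x)

lemma intervalIntegrable_log_Gamma {a b : ℝ} (ha : 0 ≤ a) (hb : 0 ≤ b) :
    IntervalIntegrable (fun x => log (Gamma x)) volume a b := by
  have hshift : ContinuousOn (fun x => log (Gamma (x + 1))) (uIcc a b) := fun x hx => by
    have hx : 0 < x + 1 := by linarith [le_trans (le_min ha hb) hx.1]
    have hGamma : ContinuousAt Gamma (x + 1) := (differentiableAt_Gamma fun m => by
      linarith [(m.cast_nonneg : (0 : ℝ) ≤ m)]).continuousAt
    exact ((hGamma.comp (f := (· + 1)) (continuous_add_const 1).continuousAt).log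
      (Gamma_pos_of_pos hx).ne').continuousWithinAt
  refine (intervalIntegrable_congr fun x hx => ?_).mp
    (hshift.intervalIntegrable.sub intervalIntegrable_log')
  have hx : 0 < x := lt_of_le_of_lt (le_min ha hb) hx.1
  simp [Gamma_add_one hx.ne', log_mul hx.ne' (Gamma_pos_of_pos hx).ne']

lemma hasSum_integral_weierstrassTerm {z : ℝ} (hz : 0 ≤ z) :
    HasSum (fun k : ℕ => ∫ x in (0 : ℝ)..z, weierstrassTerm (k + 1) x)
      (∫ x in (0 : ℝ)..z, log (Gamma x) + log x + eulerMascheroniConstant * x) := by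
  have hbound : Summable fun k : ℕ => (z / (k + 1)) ^ 2 := by
    have := (summable_nat_add_iff 1).mpr (summable_nat_pow_inv.mpr one_lt_two)
    refine (this.mul_left (z ^ 2)).congr fun k => ?_
    push_cast
    field_simp
  refine hasSum_integral_of_dominated_convergence (fun k _ => (z / (k + 1)) ^ 2)
    (fun k => ?_) (fun k => ae_of_all _ fun t ht => ?_) (ae_of_all _ fun _ _ => hbound)
    intervalIntegrable_const (ae_of_all _ fun t ht => ?_)
  · unfold weierstrassTerm
    fun_prop
  all_goals rw [uIoc_of_le hz] at ht
  · rw [norm_of_nonneg (weierstrassTerm_nonneg (by positivity) ht.1.le)]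
    refine (weierstrassTerm_le_sq (by positivity) ht.1.le).trans ?_
    gcongr
    exacts [div_nonneg ht.1.le (by positivity), ht.2]
  · exact hasSum_weierstrassTerm ht.1.le

theorem alexeiewsky_general (z : ℝ) (h0 : 0 ≤ z) :
    ∫ x in (0:ℝ)..z, Real.log (Real.Gamma x)
      = z*(1-z)/2 + (z/2) * Real.log (2*Real.pi)
        + z * Real.log (Real.Gamma z) - logBarnesG (1+z) := by
  have hsplit : ∫ x in (0 : ℝ)..z, log (Gamma x) + log x + eulerMascheroniConstant * x
      = (∫ x in (0 : ℝ)..z, log (Gamma x)) + (z * log z - z)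
        + eulerMascheroniConstant * (z ^ 2 / 2) := by
    have hlogGamma := intervalIntegrable_log_Gamma le_rfl h0
    rw [intervalIntegral.integral_add (hlogGamma.add intervalIntegrable_log')
        (intervalIntegrable_id.const_mul eulerMascheroniConstant),
      intervalIntegral.integral_add hlogGamma intervalIntegrable_log',
      integral_log, intervalIntegral.integral_const_mul, integral_id]
    simp
  have hG : HasSum (fun k : ℕ => ((k : ℝ) + 1) * log (1 + z / ((k : ℝ) + 1))
        + z ^ 2 / (2 * ((k : ℝ) + 1)) - z)
      (z * (log (Gamma z) + log z + eulerMascheroniConstant * z)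
        - ∫ x in (0 : ℝ)..z, log (Gamma x) + log x + eulerMascheroniConstant * x) := by
    refine (((hasSum_weierstrassTerm h0).mul_left z).sub
      (hasSum_integral_weierstrassTerm h0)).congr_fun fun k => ?_
    have hk : (k : ℝ) + 1 ≠ 0 := by positivity
    rw [integral_weierstrassTerm (by positivity) h0, weierstrassTerm]
    field_simp
    ring
  rw [logBarnesG, add_sub_cancel_left, hG.tsum_eq, hsplit]
  ring

theorem alexeiewsky (z : ℝ) (h0 : 0 ≤ z) (h1 : z ≤ 1) :
    ∫ x in (0:ℝ)..z, Real.log (Real.Gamma x)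
      = z*(1-z)/2 + (z/2) * Real.log (2*Real.pi)
        + z * Real.log (Real.Gamma z) - logBarnesG (1+z) :=
  alexeiewsky_general z h0
end

section
/- log A = (log 2)/36 + (γ + log(2π))/12 + (2/(3π²))·∑_{n=0}^∞ log(2n+1)/(2n+1)², where A is the Glaisher–Kinkelin constant and γ the Euler–Mascheroni constant. -/
/-!
Differentiating the functional equation `ζ(1 - s) = Γ_ℂ(s) cos(πs/2) ζ(s)` at `s = 2`, where the
cosine has vanishing derivative and equals `-1`, expresses `ζ'(-1)` through `ζ(2) = π²/6`,
`Γ'(2) = 1 - γ` and `ζ'(2) = -∑ log n / n²`. Splitting `∑ log n / n²` into even and odd terms,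
with `log (2k) = log 2 + log k` on the even ones, rewrites it via the odd series.
-/

open Real

/-- The logarithm of the Glaisher–Kinkelin constant, `log A = 1/12 - ζ'(-1)`. -/
noncomputable def logGlaisher : ℝ := 1/12 - (deriv riemannZeta (-1)).re

open Complex in
lemma LSeries.term_logMul_one_two (n : ℕ) :
    LSeries.term (LSeries.logMul 1) 2 n = ((Real.log n / (n : ℝ) ^ 2 : ℝ) : ℂ) := by
  rcases eq_or_ne n 0 with rfl | hn
  · simp
  · rw [LSeries.term_of_ne_zero hn, ← Nat.cast_ofNat, cpow_natCast, LSeries.logMul,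
      Pi.one_apply, mul_one, ← natCast_log]
    push_cast
    rfl

lemma LSeries.abscissaOfAbsConv_one_lt_two : LSeries.abscissaOfAbsConv 1 < (2 : ℂ).re := by
  rw [LSeries.abscissaOfAbsConv_one, Complex.re_ofNat]
  exact_mod_cast one_lt_two

lemma summable_log_div_sq : Summable fun n : ℕ ↦ Real.log n / (n : ℝ) ^ 2 := by
  rw [← Complex.summable_ofReal]
  exact (LSeriesSummable_logMul_of_lt_re LSeries.abscissaOfAbsConv_one_lt_two).congr
    LSeries.term_logMul_one_two

lemma deriv_riemannZeta_two :
    deriv riemannZeta 2 = -((∑' n : ℕ, Real.log n / (n : ℝ) ^ 2 : ℝ) : ℂ) := by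
  have hL : LSeries 1 =ᶠ[nhds 2] riemannZeta := by
    filter_upwards [(isOpen_lt continuous_const Complex.continuous_re).mem_nhds
      (show (1 : ℝ) < (2 : ℂ).re by norm_num)] with s hs using LSeries_one_eq_riemannZeta hs
  rw [← hL.deriv_eq, LSeries_deriv LSeries.abscissaOfAbsConv_one_lt_two, LSeries,
    Complex.ofReal_tsum]
  simp only [LSeries.term_logMul_one_two]

section

open Complex

lemma Complex.hasDerivAt_Gamma_two : HasDerivAt Gamma (1 - eulerMascheroniConstant) 2 := by
  have h := hasDerivAt_Gamma_nat 1
  norm_num [harmonic_succ] at h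
  convert h using 1
  ring

lemma Complex.two_pi_cpow_neg_two : (2 * π : ℂ) ^ (-2 : ℂ) = 1 / (4 * π ^ 2) := by
  rw [show (-2 : ℂ) = -((2 : ℕ) : ℂ) by norm_num, cpow_neg, cpow_natCast]
  ring

lemma Complex.Gamma_two : Gamma 2 = 1 := by
  simp

lemma Complex.Gammaℂ_two : Gammaℂ 2 = 1 / (2 * π ^ 2) := by
  rw [Gammaℂ_def, two_pi_cpow_neg_two, Gamma_two]
  ring

lemma Complex.hasDerivAt_Gammaℂ_two :
    HasDerivAt Gammaℂ ((1 - eulerMascheroniConstant - log (2 * π)) / (2 * π ^ 2)) 2 := by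
  have h2π : (2 * π : ℂ) ≠ 0 := by simp [Real.pi_ne_zero]
  have hpow := ((hasDerivAt_neg (2 : ℂ)).const_cpow (c := 2 * π) (Or.inl h2π)).const_mul 2
  refine (hpow.mul hasDerivAt_Gamma_two).congr_deriv ?_
  rw [two_pi_cpow_neg_two, Gamma_two]
  ring

lemma riemannZeta_one_sub_eventuallyEq {s₀ : ℂ} (hs₀ : 1 < s₀.re) :
    (fun s ↦ riemannZeta (1 - s)) =ᶠ[nhds s₀]
      fun s ↦ Gammaℂ s * cos (π * s / 2) * riemannZeta s := by
  filter_upwards [(isOpen_lt continuous_const continuous_re).mem_nhds hs₀] with s hs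
  rw [Gammaℂ_def]
  refine riemannZeta_one_sub (fun n hn ↦ ?_) (fun h ↦ ?_)
  · rw [hn, neg_re, natCast_re] at hs
    linarith [n.cast_nonneg (α := ℝ)]
  · rw [h, one_re] at hs
    exact lt_irrefl _ hs

lemma Complex.hasDerivAt_cos_pi_mul_div_two_at_two :
    HasDerivAt (fun s : ℂ ↦ cos (π * s / 2)) 0 2 := by
  have h := (((hasDerivAt_id (2 : ℂ)).const_mul (π : ℂ)).div_const 2).ccos
  rwa [id, mul_div_assoc, div_self two_ne_zero, mul_one, Complex.sin_pi, neg_zero, zero_mul] at h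

lemma deriv_riemannZeta_neg_one :
    deriv riemannZeta (-1) = (((1 - eulerMascheroniConstant - Real.log (2 * π)) / 12
      - (∑' n : ℕ, Real.log n / (n : ℝ) ^ 2) / (2 * π ^ 2) : ℝ) : ℂ) := by
  have hζ : ∀ s : ℂ, s ≠ 1 → HasDerivAt riemannZeta (deriv riemannZeta s) s := fun s hs ↦
    (differentiableAt_riemannZeta hs).hasDerivAt
  have hlhs : HasDerivAt (fun s ↦ riemannZeta (1 - s)) (-deriv riemannZeta (-1)) 2 :=
    HasDerivAt.comp_const_sub 1 2 (by norm_num [hζ (-1)])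
  have hrhs := (hasDerivAt_Gammaℂ_two.mul hasDerivAt_cos_pi_mul_div_two_at_two).mul
    (hζ 2 (by norm_num))
  have hderiv := (hlhs.congr_of_eventuallyEq
    (riemannZeta_one_sub_eventuallyEq (by norm_num)).symm).unique hrhs
  rw [Pi.mul_apply, Gammaℂ_two, mul_div_assoc, div_self two_ne_zero, mul_one,
    Complex.cos_pi, riemannZeta_two, deriv_riemannZeta_two,
    ← ofReal_ofNat, ← ofReal_mul, ← ofReal_log Real.two_pi_pos.le] at hderiv
  have hπ : (π : ℂ) ≠ 0 := ofReal_ne_zero.mpr Real.pi_ne_zero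
  push_cast at hderiv ⊢
  field_simp at hderiv ⊢
  linear_combination (-2) * hderiv

end

lemma Real.log_two_mul_div_sq (x : ℝ) :
    log (2 * x) / (2 * x) ^ 2 = (log 2 / x ^ 2 + log x / x ^ 2) / 4 := by
  rcases eq_or_ne x 0 with rfl | hx
  · simp
  · rw [Real.log_mul two_ne_zero hx]
    ring

lemma tsum_log_odd_div_sq :
    ∑' n : ℕ, log (2 * (n : ℝ) + 1) / (2 * (n : ℝ) + 1) ^ 2
      = 3 / 4 * (∑' n : ℕ, log n / (n : ℝ) ^ 2) - π ^ 2 * log 2 / 24 := by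
  set g : ℕ → ℝ := fun n ↦ log n / (n : ℝ) ^ 2
  have hzeta : HasSum (fun n : ℕ ↦ log 2 / (n : ℝ) ^ 2) (log 2 * (π ^ 2 / 6)) := by
    simpa only [mul_one_div] using hasSum_zeta_two.mul_left (log 2)
  have heven : ∑' k, g (2 * k) = (log 2 * (π ^ 2 / 6) + ∑' n, g n) / 4 := by
    simp only [g, Nat.cast_mul, Nat.cast_ofNat, Real.log_two_mul_div_sq]
    rw [tsum_div_const, hzeta.summable.tsum_add summable_log_div_sq, hzeta.tsum_eq]
  have hsplit : ∑' k, g (2 * k) + ∑' k, g (2 * k + 1) = ∑' n, g n :=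
    tsum_even_add_odd (summable_log_div_sq.comp_injective (mul_right_injective₀ two_ne_zero))
      (summable_log_div_sq.comp_injective fun a b h ↦ by omega)
  have hodd : ∑' n : ℕ, log (2 * (n : ℝ) + 1) / (2 * (n : ℝ) + 1) ^ 2
      = ∑' k, g (2 * k + 1) := by
    simp only [g, Nat.cast_add, Nat.cast_mul, Nat.cast_ofNat, Nat.cast_one]
  rw [hodd]
  linarith

theorem logGlaisher_series :
    logGlaisher = Real.log 2 / 36
      + (Real.eulerMascheroniConstant + Real.log (2*Real.pi)) / 12
      + (2 / (3*Real.pi^2))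
          * ∑' n : ℕ, Real.log (2*(n:ℝ)+1) / (2*(n:ℝ)+1)^2 := by
  rw [logGlaisher, deriv_riemannZeta_neg_one, Complex.ofReal_re, tsum_log_odd_div_sq]
  field_simp
  ring
end
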